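/- Let n ≥ 1, let 0 < ε ≤ 1/2, and let x_1, …, x_n ∈ (0, 1] be pairwise distinct. For each i ∈ {1, …, n} define p_i = (i, i) and p_i′ = (i + ε·x_i/√2, i + ε·x_i/√2) in ℝ². Then for every nonempty subset T ⊆ {1, …, n}, the closest pair of the point set ⋃_{i ∈ T} {p_i, p_i′} is {p_m, p_m′}, where m is the index in T minimising x_m; that is, ‖p_m − p_m′‖ = ε·x_m is strictly smaller than the distance between any other two distinct points of ⋃_{i ∈ T} {p_i, p_i′}. Consequently, repeatedly removing the (unique) closest pair from the point set {p_1, p_1′, …, p_n, p_n′} outputs the pairs in increasing order of x_i, i.e., sorts x_1, …, x_n. -/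

import Mathlib

/-!
All points lie on the diagonal, so distances are `√2` times differences of a single coordinate.
The two points of index `i` are at distance `ε x_i ≤ 1/2`, while points of different indices are
more than `√2 - 1/2 > 1/2` apart. Hence among the points of any index set `T`, the pair of the
index minimising `x` is strictly closest (the `x_i` being distinct), so the decremental
closest-pair procedure removes the pairs in increasing order of `x`.
-/

noncomputable section

/-- The point `p_i = (i, i)` (1-based index `i = (i : Fin n) + 1`). -/
def ptA (n : ℕ) (i : Fin n) : EuclideanSpace ℝ (Fin 2) :=
  WithLp.toLp 2 fun _ => ((i : ℕ) : ℝ) + 1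

/-- The point `p_i' = (i + ε·x_i/√2, i + ε·x_i/√2)`. -/
def ptB (n : ℕ) (ε : ℝ) (x : Fin n → ℝ) (i : Fin n) : EuclideanSpace ℝ (Fin 2) :=
  WithLp.toLp 2 fun _ => ((i : ℕ) : ℝ) + 1 + ε * x i / Real.sqrt 2

/-- The point set `⋃_{i ∈ T} {p_i, p_i'}`. -/
def ptSet (n : ℕ) (ε : ℝ) (x : Fin n → ℝ) (T : Finset (Fin n)) :
    Set (EuclideanSpace ℝ (Fin 2)) :=
  {w | ∃ i ∈ T, w = ptA n i ∨ w = ptB n ε x i}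

open Real

def diagPt (a : ℝ) : EuclideanSpace ℝ (Fin 2) :=
  WithLp.toLp 2 fun _ => a

lemma dist_diagPt (a b : ℝ) : dist (diagPt a) (diagPt b) = √2 * |a - b| := by
  rw [EuclideanSpace.dist_eq, Fin.sum_univ_two]
  simp only [diagPt, Real.dist_eq, sq_abs]
  rw [← two_mul, Real.sqrt_mul zero_le_two, Real.sqrt_sq_eq_abs]

lemma mul_mem_Icc_zero_half {ε t : ℝ} (hε0 : 0 < ε) (hε : ε ≤ 1 / 2)
    (ht : t ∈ Set.Ioc 0 1) : ε * t ∈ Set.Icc 0 (1 / 2) :=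
  ⟨mul_nonneg hε0.le ht.1.le, by nlinarith [ht.1, ht.2]⟩

section ClosestPair

variable {n : ℕ} {ε : ℝ} {x : Fin n → ℝ}

lemma dist_ptA_ptB (i : Fin n) (h : 0 ≤ ε * x i) : dist (ptA n i) (ptB n ε x i) = ε * x i := by
  change dist (diagPt _) (diagPt _) = _
  rw [dist_diagPt, abs_sub_comm, add_sub_cancel_left, abs_of_nonneg (by positivity),
    mul_div_cancel₀ _ (by positivity)]

lemma exists_diagPt_of_mem_cluster {i : Fin n} {u : EuclideanSpace ℝ (Fin 2)}
    (hu : u = ptA n i ∨ u = ptB n ε x i) (h : 0 ≤ ε * x i) :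
    ∃ c ∈ Set.Icc ((i : ℝ) + 1) ((i : ℝ) + 1 + ε * x i / √2), u = diagPt c := by
  rcases hu with rfl | rfl
  · exact ⟨_, ⟨le_rfl, by simp only [le_add_iff_nonneg_right]; positivity⟩, rfl⟩
  · exact ⟨_, ⟨by simp only [le_add_iff_nonneg_right]; positivity, le_rfl⟩, rfl⟩

lemma half_lt_dist_of_lt (hδ : ∀ i, ε * x i ∈ Set.Icc 0 (1 / 2)) {i j : Fin n} (hij : i < j)
    {u v : EuclideanSpace ℝ (Fin 2)} (hu : u = ptA n i ∨ u = ptB n ε x i)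
    (hv : v = ptA n j ∨ v = ptB n ε x j) : 1 / 2 < dist u v := by
  obtain ⟨a, ha, rfl⟩ := exists_diagPt_of_mem_cluster hu (hδ i).1
  obtain ⟨b, hb, rfl⟩ := exists_diagPt_of_mem_cluster hv (hδ j).1
  have hij' : (i : ℝ) + 1 ≤ j := by exact_mod_cast hij
  have hoff : √2 * (ε * x i / √2) = ε * x i := mul_div_cancel₀ _ (by positivity)
  rw [dist_diagPt, abs_sub_comm]
  calc (1 : ℝ) / 2 < √2 - ε * x i := by linarith [one_lt_sqrt_two, (hδ i).2]
    _ = √2 * (1 - ε * x i / √2) := by rw [mul_sub, hoff, mul_one]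
    _ ≤ √2 * (b - a) := by gcongr _ * ?_; linarith [ha.2, hb.1]
    _ ≤ √2 * |b - a| := by gcongr; exact le_abs_self _

lemma half_lt_dist_of_ne (hδ : ∀ i, ε * x i ∈ Set.Icc 0 (1 / 2)) {i j : Fin n} (hij : i ≠ j)
    {u v : EuclideanSpace ℝ (Fin 2)} (hu : u = ptA n i ∨ u = ptB n ε x i)
    (hv : v = ptA n j ∨ v = ptB n ε x j) : 1 / 2 < dist u v := by
  rcases hij.lt_or_gt with h | h
  · exact half_lt_dist_of_lt hδ h hu hv
  · exact dist_comm u v ▸ half_lt_dist_of_lt hδ h hv hu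

lemma pair_eq_and_dist_eq_of_mem_cluster {i : Fin n} (h : 0 ≤ ε * x i)
    {u v : EuclideanSpace ℝ (Fin 2)} (hu : u = ptA n i ∨ u = ptB n ε x i)
    (hv : v = ptA n i ∨ v = ptB n ε x i) (huv : u ≠ v) :
    ({u, v} : Set (EuclideanSpace ℝ (Fin 2))) = {ptA n i, ptB n ε x i} ∧
      dist u v = ε * x i := by
  rcases hu with rfl | rfl <;> rcases hv with rfl | rfl
  · exact absurd rfl huv
  · exact ⟨rfl, dist_ptA_ptB i h⟩
  · exact ⟨Set.pair_comm _ _, by rw [dist_comm, dist_ptA_ptB i h]⟩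
  · exact absurd rfl huv

variable (hε0 : 0 < ε) (hε : ε ≤ 1 / 2) (hx : ∀ i, x i ∈ Set.Ioc (0 : ℝ) 1)
  (hinj : Function.Injective x) {T : Finset (Fin n)} {m : Fin n} (hmin : ∀ i ∈ T, x m ≤ x i)
  {u v : EuclideanSpace ℝ (Fin 2)} (hu : u ∈ ptSet n ε x T) (hv : v ∈ ptSet n ε x T)
  (huv : u ≠ v)
include hε0 hε hx hinj hmin hu hv huv

lemma lt_dist_of_pair_ne
    (hpair : ({u, v} : Set (EuclideanSpace ℝ (Fin 2))) ≠ {ptA n m, ptB n ε x m}) :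
    ε * x m < dist u v := by
  have hδ i := mul_mem_Icc_zero_half hε0 hε (hx i)
  obtain ⟨i, hiT, hui⟩ := hu
  obtain ⟨j, hjT, hvj⟩ := hv
  rcases eq_or_ne i j with rfl | hij
  · obtain ⟨hp, hd⟩ := pair_eq_and_dist_eq_of_mem_cluster (hδ i).1 hui hvj huv
    have him : m ≠ i := by rintro rfl; exact hpair hp
    rw [hd]
    exact mul_lt_mul_of_pos_left ((hmin i hiT).lt_of_ne (hinj.ne him)) hε0
  · exact (hδ m).2.trans_lt (half_lt_dist_of_ne hδ hij hui hvj)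

lemma dist_ptA_ptB_le_dist : dist (ptA n m) (ptB n ε x m) ≤ dist u v := by
  by_cases hpair : ({u, v} : Set (EuclideanSpace ℝ (Fin 2))) = {ptA n m, ptB n ε x m}
  · rcases Set.pair_eq_pair_iff.mp hpair with ⟨rfl, rfl⟩ | ⟨rfl, rfl⟩
    · exact le_rfl
    · exact (dist_comm _ _).le
  · rw [dist_ptA_ptB m (mul_mem_Icc_zero_half hε0 hε (hx m)).1]
    exact (lt_dist_of_pair_ne hε0 hε hx hinj hmin hu hv huv hpair).le

end ClosestPair

theorem decremental_closest_pair_sorts_general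
    (n : ℕ) (ε : ℝ) (hε0 : 0 < ε) (hε : ε ≤ 1 / 2)
    (x : Fin n → ℝ) (hx : ∀ i, x i ∈ Set.Ioc (0 : ℝ) 1)
    (hinj : Function.Injective x) :
    -- for every nonempty subset T, the closest pair of ⋃_{i ∈ T} {p_i, p_i'} is
    -- {p_m, p_m'} where m ∈ T minimises x
    (∀ T : Finset (Fin n), T.Nonempty → ∀ m ∈ T, (∀ i ∈ T, x m ≤ x i) →
      dist (ptA n m) (ptB n ε x m) = ε * x m ∧
      ∀ u ∈ ptSet n ε x T, ∀ v ∈ ptSet n ε x T, u ≠ v →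
        ({u, v} : Set (EuclideanSpace ℝ (Fin 2))) ≠ {ptA n m, ptB n ε x m} →
        ε * x m < dist u v) ∧
    -- consequently, repeatedly removing the (unique) closest pair outputs the pairs in
    -- increasing order of x_i, i.e. sorts x_1, …, x_n
    (∃ σ : Equiv.Perm (Fin n), StrictMono (fun k => x (σ k)) ∧
      ∀ k : Fin n,
        ∀ u ∈ ptSet n ε x (Finset.univ.filter fun j => ∃ l : Fin n, k ≤ l ∧ j = σ l),
        ∀ v ∈ ptSet n ε x (Finset.univ.filter fun j => ∃ l : Fin n, k ≤ l ∧ j = σ l),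
          u ≠ v → dist (ptA n (σ k)) (ptB n ε x (σ k)) ≤ dist u v) := by
  refine ⟨fun T _ m _ hmin => ⟨dist_ptA_ptB m (mul_mem_Icc_zero_half hε0 hε (hx m)).1,
    fun u hu v hv huv => lt_dist_of_pair_ne hε0 hε hx hinj hmin hu hv huv⟩,
    Tuple.sort x, ?_, ?_⟩
  · exact (Tuple.monotone_sort x).strictMono_of_injective (hinj.comp (Tuple.sort x).injective)
  · intro k u hu v hv huv
    refine dist_ptA_ptB_le_dist hε0 hε hx hinj (fun i hi => ?_) hu hv huv
    obtain ⟨-, l, hkl, rfl⟩ := Finset.mem_filter.mp hi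
    exact Tuple.monotone_sort x hkl

theorem decremental_closest_pair_sorts
    (n : ℕ) (hn : 1 ≤ n) (ε : ℝ) (hε0 : 0 < ε) (hε : ε ≤ 1 / 2)
    (x : Fin n → ℝ) (hx : ∀ i, x i ∈ Set.Ioc (0 : ℝ) 1)
    (hinj : Function.Injective x) :
    -- for every nonempty subset T, the closest pair of ⋃_{i ∈ T} {p_i, p_i'} is
    -- {p_m, p_m'} where m ∈ T minimises x
    (∀ T : Finset (Fin n), T.Nonempty → ∀ m ∈ T, (∀ i ∈ T, x m ≤ x i) →
      dist (ptA n m) (ptB n ε x m) = ε * x m ∧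
      ∀ u ∈ ptSet n ε x T, ∀ v ∈ ptSet n ε x T, u ≠ v →
        ({u, v} : Set (EuclideanSpace ℝ (Fin 2))) ≠ {ptA n m, ptB n ε x m} →
        ε * x m < dist u v) ∧
    -- consequently, repeatedly removing the (unique) closest pair outputs the pairs in
    -- increasing order of x_i, i.e. sorts x_1, …, x_n
    (∃ σ : Equiv.Perm (Fin n), StrictMono (fun k => x (σ k)) ∧
      ∀ k : Fin n,
        ∀ u ∈ ptSet n ε x (Finset.univ.filter fun j => ∃ l : Fin n, k ≤ l ∧ j = σ l),
        ∀ v ∈ ptSet n ε x (Finset.univ.filter fun j => ∃ l : Fin n, k ≤ l ∧ j = σ l),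
          u ≠ v → dist (ptA n (σ k)) (ptB n ε x (σ k)) ≤ dist u v) :=
  decremental_closest_pair_sorts_general n ε hε0 hε x hx hinj
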